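/- Let X and Y be Hausdorff topological spaces and f : X → Y a continuous, open, surjective map such that every fibre has at most n elements. Then X and Y have the same Cantor-Bendixson rank. -/

import Mathlib

open Filter

/-- The `o`-th Cantor–Bendixson derivative of the space `X`: at successors remove isolated
points (keep only accumulation points), at limits take intersections. -/
noncomputable def cbDeriv (X : Type*) [TopologicalSpace X] (o : Ordinal) : Set X :=
  Ordinal.limitRecOn o Set.univ
    (fun _ s => {x | x ∈ s ∧ AccPt x (𝓟 s)})
    (fun o _ ih => ⋂ (o' : Ordinal) (h : o' < o), ih o' h)

/-! For a continuous open map with finite fibres from a T₁ space, `x` is an accumulation point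
of `f ⁻¹' s` exactly when `f x` is one of `s`: openness pushes
neighbourhoods of `x` forward, and the finitely many other points of the fibre of `f x` can be
cut out of any neighbourhood of `x`. Hence the Cantor–Bendixson derivatives of `X` are the
preimages of those of `Y`, and surjectivity transfers nonemptiness back. -/

open Topology

section CantorBendixson

variable {X Y : Type*} [TopologicalSpace X] [TopologicalSpace Y]

lemma cbDeriv_zero : cbDeriv X 0 = Set.univ :=
  Ordinal.limitRecOn_zero ..

lemma cbDeriv_add_one (o : Ordinal) :
    cbDeriv X (o + 1) = {x | x ∈ cbDeriv X o ∧ AccPt x (𝓟 (cbDeriv X o))} :=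
  Ordinal.limitRecOn_add_one ..

lemma cbDeriv_limit {o : Ordinal} (ho : Order.IsSuccLimit o) :
    cbDeriv X o = ⋂ (o' : Ordinal) (_ : o' < o), cbDeriv X o' :=
  Ordinal.limitRecOn_limit _ _ _ _ ho

lemma AccPt.of_preimage_of_finite_fiber [T1Space X] {f : X → Y} {x : X} {s : Set Y}
    (h : AccPt x (𝓟 (f ⁻¹' s))) (hf : ContinuousAt f x) (hfib : (f ⁻¹' {f x}).Finite) :
    AccPt (f x) (𝓟 s) := by
  rw [accPt_iff_nhds] at h ⊢
  intro V hV
  have hfiber_closed : IsClosed (f ⁻¹' {f x} \ {x}) := (hfib.subset Set.sdiff_subset).isClosed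
  have hU : f ⁻¹' V ∩ (f ⁻¹' {f x} \ {x})ᶜ ∈ 𝓝 x :=
    inter_mem (hf.preimage_mem_nhds hV) (hfiber_closed.isOpen_compl.mem_nhds (by simp))
  obtain ⟨x', ⟨⟨hx'V, hx'fiber⟩, hx's⟩, hx'x⟩ := h _ hU
  exact ⟨f x', ⟨hx'V, hx's⟩, fun hfx' => hx'fiber ⟨hfx', hx'x⟩⟩

lemma accPt_preimage_iff [T1Space X] {f : X → Y} (hcont : Continuous f) (hopen : IsOpenMap f)
    (hfib : ∀ y, (f ⁻¹' {y}).Finite) {x : X} {s : Set Y} :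
    AccPt x (𝓟 (f ⁻¹' s)) ↔ AccPt (f x) (𝓟 s) :=
  ⟨fun h => h.of_preimage_of_finite_fiber hcont.continuousAt (hfib _),
    fun h => comap_principal (t := s) ▸ hopen.accPt_comap h⟩

theorem cbDeriv_eq_preimage [T1Space X] {f : X → Y} (hcont : Continuous f)
    (hopen : IsOpenMap f) (hfib : ∀ y, (f ⁻¹' {y}).Finite) (o : Ordinal) :
    cbDeriv X o = f ⁻¹' cbDeriv Y o := by
  induction o using Ordinal.limitRecOn with
  | zero => simp only [cbDeriv_zero, Set.preimage_univ]
  | add_one o ih =>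
    ext x
    simp only [cbDeriv_add_one, ih, Set.mem_ofPred_eq, Set.mem_preimage,
      accPt_preimage_iff hcont hopen hfib]
  | limit o ho ih =>
    simp only [cbDeriv_limit ho, Set.preimage_iInter₂]
    exact Set.iInter₂_congr ih

end CantorBendixson

theorem stmt_8_general {X Y : Type*} [TopologicalSpace X] [TopologicalSpace Y]
    [T2Space X] (f : X → Y) (n : ℕ) (hcont : Continuous f)
    (hopen : IsOpenMap f) (hsurj : Function.Surjective f)
    (hfib : ∀ y : Y, (f ⁻¹' {y}).Finite ∧ (f ⁻¹' {y}).ncard ≤ n) :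
    ∀ o : Ordinal, ((cbDeriv X o).Nonempty ↔ (cbDeriv Y o).Nonempty) := fun o => by
  rw [cbDeriv_eq_preimage hcont hopen (fun y => (hfib y).1) o]
  exact hsurj.nonempty_preimage

/-- If `f : X → Y` is continuous, open and onto with fibres of size at most `n`, then `X` and
`Y` have the same Cantor–Bendixson rank: their `o`-th derivatives vanish simultaneously. -/
theorem stmt_8 {X Y : Type*} [TopologicalSpace X] [TopologicalSpace Y]
    [T2Space X] [T2Space Y] (f : X → Y) (n : ℕ) (hcont : Continuous f)
    (hopen : IsOpenMap f) (hsurj : Function.Surjective f)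
    (hfib : ∀ y : Y, (f ⁻¹' {y}).Finite ∧ (f ⁻¹' {y}).ncard ≤ n) :
    ∀ o : Ordinal, ((cbDeriv X o).Nonempty ↔ (cbDeriv Y o).Nonempty) :=
  stmt_8_general f n hcont hopen hsurj hfib
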